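/- arXiv:2206.00414 — 8 statements merged into one kernel-verified Lean document; each statement's English description precedes it below -/
import Mathlib

section
/- Let α₀ > 0 and β > 0 be constants and set A₀ := α₀/β. Suppose H : [0,∞) → ℝ is differentiable, H(t) ≥ 0 for all t ≥ 0, and (1/2)·H'(t) ≤ α₀·H(t) − β·H(t)² for all t ≥ 0. Then for every T > 0 the time average satisfies ⟨H⟩_T ≤ A₀ + √(H(0)/(2βT)). In particular, limsup_{T→∞} ⟨H⟩_T ≤ A₀. -/
/-!
Integrating `H' ≤ 2α₀H − 2βH²` over `[0, T]` and dropping `H(T) ≥ 0` gives the energy balance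
`β ∫₀ᵀ H² ≤ α₀ ∫₀ᵀ H + H(0)/2`. By Cauchy–Schwarz `T ⟨H⟩_T² ≤ ∫₀ᵀ H²`, so the average
`x = ⟨H⟩_T` satisfies the quadratic inequality `x² ≤ A₀ x + H(0)/(2βT)`, whence
`x ≤ A₀ + √(H(0)/(2βT))`. The correction term tends to `0` as `T → ∞`.
-/

open MeasureTheory (volume)
open intervalIntegral Filter Set Topology

noncomputable def timeAverage (f : ℝ → ℝ) (T : ℝ) : ℝ := (1 / T) * ∫ τ in (0 : ℝ)..T, f τ

theorem timeAverage_nonneg {f : ℝ → ℝ} {T : ℝ} (hT : 0 ≤ T) (hf : ∀ t ∈ Icc 0 T, 0 ≤ f t) :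
    0 ≤ timeAverage f T :=
  mul_nonneg (one_div_nonneg.2 hT) (integral_nonneg hT hf)

theorem sq_intervalIntegral_le_mul_integral_sq {f : ℝ → ℝ} {a b : ℝ} (hab : a ≤ b)
    (hf : IntervalIntegrable f volume a b)
    (hf2 : IntervalIntegrable (fun x => f x ^ 2) volume a b) :
    (∫ x in a..b, f x) ^ 2 ≤ (b - a) * ∫ x in a..b, f x ^ 2 := by
  -- `m ↦ ∫ (f - m)²` is a nonnegative quadratic polynomial, so its discriminant is `≤ 0`.
  have hdev : ∀ m : ℝ, 0 ≤ (b - a) * (m * m) + (-2 * ∫ x in a..b, f x) * m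
      + ∫ x in a..b, f x ^ 2 := fun m => by
    have hexpand : ∫ x in a..b, (f x - m) ^ 2
        = (∫ x in a..b, f x ^ 2) - 2 * m * (∫ x in a..b, f x) + m ^ 2 * (b - a) := by
      simp_rw [sub_sq]
      rw [integral_add (hf2.sub ((hf.const_mul 2).mul_const m)) intervalIntegrable_const,
        integral_sub hf2 ((hf.const_mul 2).mul_const m), integral_mul_const, integral_const_mul,
        integral_const, smul_eq_mul]
      ring
    have : 0 ≤ ∫ x in a..b, (f x - m) ^ 2 := integral_nonneg hab fun x _ => sq_nonneg _
    linarith [sq m]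
  have := discrim_le_zero hdev
  rw [discrim] at this
  linarith

theorem integral_sq_le_of_energy_ineq {α β a b : ℝ} {H H' : ℝ → ℝ} (hab : a ≤ b)
    (hderiv : ∀ t ∈ Icc a b, HasDerivAt H (H' t) t) (hHb : 0 ≤ H b)
    (hineq : ∀ t ∈ Ioo a b, (1 / 2) * H' t ≤ α * H t - β * H t ^ 2) :
    β * ∫ t in a..b, H t ^ 2 ≤ α * (∫ t in a..b, H t) + H a / 2 := by
  have hcont : ContinuousOn H (Icc a b) := fun t ht =>
    (hderiv t ht).continuousAt.continuousWithinAt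
  have hH : IntervalIntegrable H volume a b := hcont.intervalIntegrable_of_Icc hab
  have hH2 : IntervalIntegrable (fun t => H t ^ 2) volume a b :=
    (hcont.pow 2).intervalIntegrable_of_Icc hab
  have hrhs : ContinuousOn (fun t => 2 * (α * H t - β * H t ^ 2)) (Icc a b) := by fun_prop
  -- `H'` need not be integrable; only the continuous upper bound on it is integrated.
  have hgrowth := sub_le_integral_of_hasDeriv_right_of_le hab hcont
    (fun t ht => (hderiv t (Ioo_subset_Icc_self ht)).hasDerivWithinAt)
    hrhs.integrableOn_Icc (fun t ht => by linarith [hineq t ht])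
  rw [integral_const_mul, integral_sub (hH.const_mul α) (hH2.const_mul β),
    integral_const_mul, integral_const_mul] at hgrowth
  linarith

theorem le_add_sqrt_of_sq_le_mul_add {x A c : ℝ} (hA : 0 ≤ A) (h : x ^ 2 ≤ A * x + c) :
    x ≤ A + √c := by
  have hc : c ≤ √c ^ 2 := by
    rcases le_or_gt 0 c with hc | hc
    · rw [Real.sq_sqrt hc]
    · nlinarith [sq_nonneg √c]
  by_contra! hlt
  nlinarith [Real.sqrt_nonneg c]

theorem timeAverage_le_of_energy_ineq {α β T : ℝ} {H H' : ℝ → ℝ} (hα : 0 ≤ α) (hβ : 0 < β)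
    (hT : 0 < T) (hderiv : ∀ t ∈ Icc 0 T, HasDerivAt H (H' t) t) (hHT : 0 ≤ H T)
    (hineq : ∀ t ∈ Ioo 0 T, (1 / 2) * H' t ≤ α * H t - β * H t ^ 2) :
    timeAverage H T ≤ α / β + √(H 0 / (2 * β * T)) := by
  have hcont : ContinuousOn H (Icc 0 T) := fun t ht =>
    (hderiv t ht).continuousAt.continuousWithinAt
  have hcs := sq_intervalIntegral_le_mul_integral_sq hT.le
    (hcont.intervalIntegrable_of_Icc hT.le) ((hcont.pow 2).intervalIntegrable_of_Icc hT.le)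
  have hbalance := integral_sq_le_of_energy_ineq hT.le hderiv hHT hineq
  set I := ∫ t in (0 : ℝ)..T, H t
  set J := ∫ t in (0 : ℝ)..T, H t ^ 2
  have hx : timeAverage H T = I / T := one_div_mul_eq_div T I
  have hquad : (I / T) ^ 2 ≤ α / β * (I / T) + H 0 / (2 * β * T) := by
    have hβT : 0 < β * T := mul_pos hβ hT
    calc (I / T) ^ 2 ≤ J / T := by
          rw [div_pow, div_le_div_iff₀ (by positivity) hT]; nlinarith
      _ = β * J / (β * T) := (mul_div_mul_left J T hβ.ne').symm
      _ ≤ (α * I + H 0 / 2) / (β * T) := by gcongr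
      _ = α / β * (I / T) + H 0 / (2 * β * T) := by field_simp
  rw [hx]
  exact le_add_sqrt_of_sq_le_mul_add (div_nonneg hα hβ.le) hquad

theorem tendsto_sqrt_div_mul_atTop_zero (c : ℝ) {k : ℝ} (hk : 0 < k) :
    Tendsto (fun T => √(c / (k * T))) atTop (𝓝 0) := by
  simpa using (tendsto_const_nhds.div_atTop (tendsto_id.const_mul_atTop hk)).sqrt

/-- Under the energy differential inequality
`(1/2)·H' ≤ α₀·H − β·H²` with `H ≥ 0`, for every `T > 0` the time average
`⟨H⟩_T = (1/T)∫₀ᵀ H` satisfies `⟨H⟩_T ≤ A₀ + √(H(0)/(2βT))` where `A₀ = α₀/β`;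
in particular `limsup_{T→∞} ⟨H⟩_T ≤ A₀`. -/
theorem toner_tu_time_averaged_energy (α₀ β : ℝ) (hα : 0 < α₀) (hβ : 0 < β)
    (H H' : ℝ → ℝ)
    (hderiv : ∀ t ≥ (0:ℝ), HasDerivAt H (H' t) t)
    (hnonneg : ∀ t ≥ (0:ℝ), 0 ≤ H t)
    (hineq : ∀ t ≥ (0:ℝ), (1/2) * H' t ≤ α₀ * H t - β * (H t)^2) :
    (∀ T > (0:ℝ), (1/T) * ∫ τ in (0:ℝ)..T, H τ ≤
        α₀ / β + Real.sqrt (H 0 / (2 * β * T))) ∧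
    Filter.limsup (fun T => (1/T) * ∫ τ in (0:ℝ)..T, H τ) Filter.atTop ≤ α₀ / β := by
  have hbound : ∀ T > (0 : ℝ), timeAverage H T ≤ α₀ / β + √(H 0 / (2 * β * T)) :=
    fun T hT => timeAverage_le_of_energy_ineq hα.le hβ hT (fun t ht => hderiv t ht.1)
      (hnonneg T hT.le) (fun t ht => hineq t ht.1.le)
  refine ⟨hbound, ?_⟩
  have hlim : Tendsto (fun T => α₀ / β + √(H 0 / (2 * β * T))) atTop (𝓝 (α₀ / β)) := by
    simpa using (tendsto_sqrt_div_mul_atTop_zero (H 0) (by positivity : 0 < 2 * β)).const_add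
      (α₀ / β)
  have hcobdd : IsCoboundedUnder (· ≤ ·) atTop (timeAverage H) :=
    isCoboundedUnder_le_of_eventually_le atTop <| (eventually_ge_atTop 0).mono
      fun T hT => timeAverage_nonneg hT fun t ht => hnonneg t ht.1
  calc limsup (timeAverage H) atTop
      ≤ limsup (fun T => α₀ / β + √(H 0 / (2 * β * T))) atTop :=
        limsup_le_limsup ((eventually_gt_atTop 0).mono hbound) hcobdd hlim.isBoundedUnder_le
    _ = α₀ / β := hlim.limsup_eq
end

section
/- Let α₀ > 0, β > 0 and Re > 0 be constants and set A₀ := α₀/β. Suppose H₀, H₁, F : [0,∞) → ℝ are continuous and nonnegative, H₀ is differentiable, F(t) ≥ H₀(t)² for all t ≥ 0, and the energy inequality (1/2)·H₀'(t) + Re⁻¹·H₁(t) + β·F(t) ≤ α₀·H₀(t) holds for all t ≥ 0. Then for every T > 0 the time average of H₁ satisfies ⟨H₁⟩_T ≤ Re·[ α₀·( A₀ + √(H₀(0)/(2βT)) ) + H₀(0)/(2T) ]. -/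
/-- Under the Leray-type energy inequality
`(1/2)·H₀' + Re⁻¹·H₁ + β·F ≤ α₀·H₀` with `F ≥ H₀²`, the time average of the
enstrophy satisfies `⟨H₁⟩_T ≤ Re·[α₀·(A₀ + √(H₀(0)/(2βT))) + H₀(0)/(2T)]`
for every `T > 0`, where `A₀ = α₀/β`. -/
theorem toner_tu_time_averaged_enstrophy (α₀ β Re : ℝ)
    (hα : 0 < α₀) (hβ : 0 < β) (hRe : 0 < Re)
    (H₀ H₀' H₁ F : ℝ → ℝ)
    (hH₀c : ContinuousOn H₀ (Set.Ici (0:ℝ)))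
    (hH₁c : ContinuousOn H₁ (Set.Ici (0:ℝ)))
    (hFc : ContinuousOn F (Set.Ici (0:ℝ)))
    (hderiv : ∀ t ≥ (0:ℝ), HasDerivAt H₀ (H₀' t) t)
    (hH₀nn : ∀ t ≥ (0:ℝ), 0 ≤ H₀ t)
    (hH₁nn : ∀ t ≥ (0:ℝ), 0 ≤ H₁ t)
    (hFnn : ∀ t ≥ (0:ℝ), 0 ≤ F t)
    (hFH₀ : ∀ t ≥ (0:ℝ), (H₀ t)^2 ≤ F t)
    (hineq : ∀ t ≥ (0:ℝ), (1/2) * H₀' t + Re⁻¹ * H₁ t + β * F t ≤ α₀ * H₀ t)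
    (T : ℝ) (hT : 0 < T) :
    (1/T) * ∫ τ in (0:ℝ)..T, H₁ τ ≤
      Re * (α₀ * (α₀ / β + Real.sqrt (H₀ 0 / (2 * β * T))) + H₀ 0 / (2 * T)) := by
  set g : ℝ → ℝ := fun t => Re⁻¹ * H₁ t + β * F t - α₀ * H₀ t with hgdef
  have hgc : ContinuousOn g (Set.Ici (0:ℝ)) := by
    apply ContinuousOn.sub
    · exact (continuousOn_const.mul hH₁c).add (continuousOn_const.mul hFc)
    · exact continuousOn_const.mul hH₀c
  have hIccsub : Set.Icc (0:ℝ) T ⊆ Set.Ici 0 := Set.Icc_subset_Ici_self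
  have hgIcc : ContinuousOn g (Set.Icc 0 T) := hgc.mono hIccsub
  have hgint : IntervalIntegrable g MeasureTheory.volume 0 T := by
    exact hgIcc.intervalIntegrable_of_Icc hT.le
  -- φ is antitone on [0,T]
  set φ : ℝ → ℝ := fun t => (1/2) * H₀ t + ∫ τ in (0:ℝ)..t, g τ with hφdef
  have hφanti : AntitoneOn φ (Set.Icc 0 T) := by
    have hconv : Convex ℝ (Set.Icc (0:ℝ) T) := convex_Icc 0 T
    have hφc : ContinuousOn φ (Set.Icc 0 T) := by
      apply ContinuousOn.add
      · exact continuousOn_const.mul (hH₀c.mono hIccsub)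
      · have := intervalIntegral.continuousOn_primitive_interval'
          (f := g) (μ := MeasureTheory.volume) hgint Set.left_mem_uIcc
        rwa [Set.uIcc_of_le hT.le] at this
    have hderivφ : ∀ t ∈ interior (Set.Icc (0:ℝ) T), HasDerivAt φ ((1/2) * H₀' t + g t) t := by
      intro t ht
      rw [interior_Icc] at ht
      have ht0 : (0:ℝ) < t := ht.1
      have h1 : HasDerivAt (fun t => (1/2) * H₀ t) ((1/2) * H₀' t) t :=
        (hderiv t ht0.le).const_mul _
      have h2 : HasDerivAt (fun u => ∫ τ in (0:ℝ)..u, g τ) (g t) t := by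
        apply intervalIntegral.integral_hasDerivAt_right
        · exact (hgc.mono Set.Icc_subset_Ici_self).intervalIntegrable_of_Icc ht0.le
        · exact (hgc.mono (Set.Ioi_subset_Ici_self)).stronglyMeasurableAtFilter isOpen_Ioi t ht0
        · exact (hgc t ht0.le).continuousAt (Ici_mem_nhds ht0)
      exact h1.add h2
    apply antitoneOn_of_deriv_nonpos hconv hφc
    · intro t ht
      exact (hderivφ t ht).differentiableAt.differentiableWithinAt
    · intro t ht
      rw [(hderivφ t ht).deriv]
      have ht0 : (0:ℝ) ≤ t := by rw [interior_Icc] at ht; exact ht.1.le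
      have := hineq t ht0
      simp only [hgdef]
      linarith
  have hkey : ∫ τ in (0:ℝ)..T, g τ ≤ H₀ 0 / 2 := by
    have := hφanti (Set.left_mem_Icc.2 hT.le) (Set.right_mem_Icc.2 hT.le) hT.le
    simp only [hφdef, intervalIntegral.integral_same] at this
    have hT0 : 0 ≤ H₀ T := hH₀nn T hT.le
    linarith
  -- pointwise: Re⁻¹ H₁ ≤ g + α₀²/(4β)
  have hpt : ∀ t ∈ Set.Icc (0:ℝ) T, Re⁻¹ * H₁ t ≤ g t + α₀^2 / (4*β) := by
    intro t ht
    have h1 := hFH₀ t ht.1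
    have h2 : α₀ * H₀ t - β * F t ≤ α₀^2 / (4*β) := by
      rw [le_div_iff₀ (by positivity : (0:ℝ) < 4*β)]
      have h1' : β^2 * (H₀ t)^2 ≤ β^2 * F t :=
        mul_le_mul_of_nonneg_left h1 (sq_nonneg β)
      nlinarith [sq_nonneg (2 * β * H₀ t - α₀)]
    simp only [hgdef]
    linarith
  have hint1 : ∫ τ in (0:ℝ)..T, Re⁻¹ * H₁ τ ≤ ∫ τ in (0:ℝ)..T, (g τ + α₀^2/(4*β)) := by
    apply intervalIntegral.integral_mono_on hT.le
    · exact ((continuousOn_const.mul hH₁c).mono hIccsub).intervalIntegrable_of_Icc hT.le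
    · exact hgint.add intervalIntegrable_const
    · exact hpt
  have hint2 : ∫ τ in (0:ℝ)..T, (g τ + α₀^2/(4*β)) = (∫ τ in (0:ℝ)..T, g τ) + α₀^2/(4*β) * T := by
    rw [intervalIntegral.integral_add hgint intervalIntegrable_const,
        intervalIntegral.integral_const, smul_eq_mul, sub_zero, mul_comm]
  have hmul : ∫ τ in (0:ℝ)..T, Re⁻¹ * H₁ τ = Re⁻¹ * ∫ τ in (0:ℝ)..T, H₁ τ :=
    intervalIntegral.integral_const_mul _ _
  have hbound : ∫ τ in (0:ℝ)..T, H₁ τ ≤ Re * (H₀ 0 / 2 + α₀^2/(4*β) * T) := by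
    have h := hint1
    rw [hmul, hint2] at h
    have : Re⁻¹ * ∫ τ in (0:ℝ)..T, H₁ τ ≤ H₀ 0 / 2 + α₀^2/(4*β) * T := by linarith
    calc ∫ τ in (0:ℝ)..T, H₁ τ = Re * (Re⁻¹ * ∫ τ in (0:ℝ)..T, H₁ τ) := by
          field_simp
      _ ≤ Re * (H₀ 0 / 2 + α₀^2/(4*β) * T) := by
          exact mul_le_mul_of_nonneg_left this hRe.le
  have hsqrt : 0 ≤ Real.sqrt (H₀ 0 / (2 * β * T)) := Real.sqrt_nonneg _
  have hfinal : (1/T) * ∫ τ in (0:ℝ)..T, H₁ τ ≤ Re * (α₀^2/(4*β) + H₀ 0 / (2*T)) := by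
    rw [div_mul_eq_mul_div, one_mul, div_le_iff₀ hT]
    calc ∫ τ in (0:ℝ)..T, H₁ τ ≤ Re * (H₀ 0 / 2 + α₀^2/(4*β) * T) := hbound
      _ = Re * (α₀^2/(4*β) + H₀ 0 / (2*T)) * T := by field_simp; ring
  refine hfinal.trans ?_
  apply mul_le_mul_of_nonneg_left _ hRe.le
  have h1 : α₀^2/(4*β) ≤ α₀ * (α₀/β) := by
    rw [mul_div_assoc', div_le_div_iff₀ (by positivity) hβ]
    nlinarith
  nlinarith [mul_le_mul_of_nonneg_left hsqrt hα.le]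
end

section
/- Let α₀ > 0 and Re > 0 be constants and let T > 0. Suppose H₀, H₁ : [0,∞) → ℝ are continuous, H₀ is differentiable and strictly positive, H₁ is nonnegative, and (1/2)·H₀'(t) + Re⁻¹·H₁(t) ≤ α₀·H₀(t) for all t ≥ 0. Then the time average of the ratio satisfies ⟨H₁/H₀⟩_T ≤ Re·[ α₀ + (1/(2T))·ln( H₀(0)/H₀(T) ) ]. -/
/-! Dividing the energy inequality by `H₀ > 0` bounds `H₁ / H₀` by `Re · (α₀ - (log H₀)' / 2)`;
integrating over `[0, T]` turns the derivative term into `(Re / 2) · log (H₀ 0 / H₀ T)`. -/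

open Set MeasureTheory

theorem integral_le_of_le_sub_mul_logDeriv {f f' φ : ℝ → ℝ} {a b c k : ℝ} (hab : a ≤ b)
    (hf : ∀ x ∈ Icc a b, HasDerivAt f (f' x) x) (hf_pos : ∀ x ∈ Icc a b, 0 < f x)
    (hφ : IntegrableOn φ (Icc a b)) (hle : ∀ x ∈ Ioo a b, φ x ≤ c - k * (f' x / f x)) :
    ∫ x in a..b, φ x ≤ c * (b - a) + k * Real.log (f a / f b) := by
  have hg_deriv : ∀ x ∈ Icc a b,
      HasDerivAt (fun t => c * t - k * Real.log (f t)) (c - k * (f' x / f x)) x := fun x hx => by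
    simpa using ((hasDerivAt_id x).const_mul c).fun_sub
      (((hf x hx).log (hf_pos x hx).ne').const_mul k)
  have key := intervalIntegral.integral_le_sub_of_hasDeriv_right_of_le hab
    (fun x hx => (hg_deriv x hx).continuousAt.continuousWithinAt)
    (fun x hx => (hg_deriv x (Ioo_subset_Icc_self hx)).hasDerivWithinAt) hφ hle
  rw [Real.log_div (hf_pos a (left_mem_Icc.2 hab)).ne' (hf_pos b (right_mem_Icc.2 hab)).ne']
  linarith

theorem div_le_mul_sub_half_logDeriv {Re α₀ h h' h₁ : ℝ} (hRe : 0 < Re) (hh : 0 < h)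
    (hineq : (1/2) * h' + Re⁻¹ * h₁ ≤ α₀ * h) :
    h₁ / h ≤ Re * α₀ - Re / 2 * (h' / h) := by
  have hh₁ : h₁ ≤ Re * (α₀ * h - (1/2) * h') := by
    rw [← inv_mul_le_iff₀ hRe]
    linarith
  rw [div_le_iff₀ hh]
  calc h₁ ≤ Re * (α₀ * h - (1/2) * h') := hh₁
    _ = (Re * α₀ - Re / 2 * (h' / h)) * h := by field_simp

theorem toner_tu_time_averaged_ratio_general (α₀ Re : ℝ) (hRe : 0 < Re)
    (T : ℝ) (hT : 0 < T)
    (H₀ H₀' H₁ : ℝ → ℝ)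
    (hH₁c : ContinuousOn H₁ (Set.Ici (0:ℝ)))
    (hderiv : ∀ t ≥ (0:ℝ), HasDerivAt H₀ (H₀' t) t)
    (hH₀pos : ∀ t ≥ (0:ℝ), 0 < H₀ t)
    (hineq : ∀ t ≥ (0:ℝ), (1/2) * H₀' t + Re⁻¹ * H₁ t ≤ α₀ * H₀ t) :
    (1/T) * ∫ τ in (0:ℝ)..T, H₁ τ / H₀ τ ≤
      Re * (α₀ + (1/(2*T)) * Real.log (H₀ 0 / H₀ T)) := by
  have hratio_cont : ContinuousOn (fun τ => H₁ τ / H₀ τ) (Icc 0 T) :=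
    (hH₁c.mono Icc_subset_Ici_self).div
      (fun t ht => (hderiv t ht.1).continuousAt.continuousWithinAt)
      (fun t ht => (hH₀pos t ht.1).ne')
  have hint : ∫ τ in (0:ℝ)..T, H₁ τ / H₀ τ ≤
      Re * α₀ * (T - 0) + Re / 2 * Real.log (H₀ 0 / H₀ T) :=
    integral_le_of_le_sub_mul_logDeriv hT.le (fun t ht => hderiv t ht.1)
      (fun t ht => hH₀pos t ht.1) hratio_cont.integrableOn_Icc
      (fun t ht => div_le_mul_sub_half_logDeriv hRe (hH₀pos t ht.1.le) (hineq t ht.1.le))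
  calc (1/T) * ∫ τ in (0:ℝ)..T, H₁ τ / H₀ τ
      ≤ (1/T) * (Re * α₀ * (T - 0) + Re / 2 * Real.log (H₀ 0 / H₀ T)) := by gcongr
    _ = Re * (α₀ + (1/(2*T)) * Real.log (H₀ 0 / H₀ T)) := by field_simp; ring

/-- If `H₀ > 0` is differentiable, `H₁ ≥ 0`, and
`(1/2)·H₀' + Re⁻¹·H₁ ≤ α₀·H₀` on `[0,∞)`, then for `T > 0` the time average of
the ratio satisfies `⟨H₁/H₀⟩_T ≤ Re·[α₀ + (1/(2T))·ln(H₀(0)/H₀(T))]`. -/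
theorem toner_tu_time_averaged_ratio (α₀ Re : ℝ) (hα : 0 < α₀) (hRe : 0 < Re)
    (T : ℝ) (hT : 0 < T)
    (H₀ H₀' H₁ : ℝ → ℝ)
    (hH₀c : ContinuousOn H₀ (Set.Ici (0:ℝ)))
    (hH₁c : ContinuousOn H₁ (Set.Ici (0:ℝ)))
    (hderiv : ∀ t ≥ (0:ℝ), HasDerivAt H₀ (H₀' t) t)
    (hH₀pos : ∀ t ≥ (0:ℝ), 0 < H₀ t)
    (hH₁nn : ∀ t ≥ (0:ℝ), 0 ≤ H₁ t)
    (hineq : ∀ t ≥ (0:ℝ), (1/2) * H₀' t + Re⁻¹ * H₁ t ≤ α₀ * H₀ t) :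
    (1/T) * ∫ τ in (0:ℝ)..T, H₁ τ / H₀ τ ≤
      Re * (α₀ + (1/(2*T)) * Real.log (H₀ 0 / H₀ T)) :=
  toner_tu_time_averaged_ratio_general α₀ Re hRe T hT H₀ H₀' H₁ hH₁c hderiv hH₀pos hineq
end

section
/- Let α₀ > 0, β > 0 and κ > 0 be constants, set A₀ := α₀/β, and let M := max(H₀(0), A₀). Suppose H₀, H₁, F : [0,∞) → ℝ are continuous and nonnegative, H₀ and H₁ are differentiable, F(t) ≥ H₀(t)² for all t ≥ 0, and for all t ≥ 0: (i) (1/2)·H₀'(t) + β·F(t) ≤ α₀·H₀(t), and (ii) (1/2)·H₁'(t) ≤ (α₀ + κ·F(t))·H₁(t). Then for every T > 0, H₁(T) ≤ H₁(0)·exp( 2α₀·T + (2κ/β)·( α₀·M·T + H₀(0)/2 ) ). In particular H₁(T) is finite for every finite T, i.e. the bound grows at most exponentially in time. -/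
/-- The 2d global-regularity estimate in abstract form. If
`(1/2)·H₀' + β·F ≤ α₀·H₀` with `F ≥ H₀²`, and
`(1/2)·H₁' ≤ (α₀ + κ·F)·H₁`, then with `M := max(H₀(0), α₀/β)`,
`H₁(T) ≤ H₁(0)·exp(2α₀T + (2κ/β)·(α₀·M·T + H₀(0)/2))` for every `T > 0`. -/
theorem toner_tu_2d_regularity (α₀ β κ : ℝ) (hα : 0 < α₀) (hβ : 0 < β) (hκ : 0 < κ)
    (H₀ H₀' H₁ H₁' F : ℝ → ℝ)
    (hH₀c : ContinuousOn H₀ (Set.Ici (0:ℝ)))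
    (hH₁c : ContinuousOn H₁ (Set.Ici (0:ℝ)))
    (hFc : ContinuousOn F (Set.Ici (0:ℝ)))
    (hH₀nn : ∀ t ≥ (0:ℝ), 0 ≤ H₀ t)
    (hH₁nn : ∀ t ≥ (0:ℝ), 0 ≤ H₁ t)
    (hFnn : ∀ t ≥ (0:ℝ), 0 ≤ F t)
    (hd0 : ∀ t ≥ (0:ℝ), HasDerivAt H₀ (H₀' t) t)
    (hd1 : ∀ t ≥ (0:ℝ), HasDerivAt H₁ (H₁' t) t)
    (hFH₀ : ∀ t ≥ (0:ℝ), (H₀ t)^2 ≤ F t)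
    (hi : ∀ t ≥ (0:ℝ), (1/2) * H₀' t + β * F t ≤ α₀ * H₀ t)
    (hii : ∀ t ≥ (0:ℝ), (1/2) * H₁' t ≤ (α₀ + κ * F t) * H₁ t)
    (T : ℝ) (hT : 0 < T) :
    H₁ T ≤ H₁ 0 * Real.exp (2 * α₀ * T +
      (2 * κ / β) * (α₀ * max (H₀ 0) (α₀ / β) * T + H₀ 0 / 2)) := by
  set M := max (H₀ 0) (α₀ / β) with hM
  -- Extended (globally continuous) version of F
  set Ft : ℝ → ℝ := fun t => F (max t 0) with hFtdef
  have hFtc : Continuous Ft :=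
    hFc.comp_continuous (continuous_id.max continuous_const) fun x => le_max_right x 0
  have hFteq : ∀ t ≥ (0:ℝ), Ft t = F t := by
    intro t ht; simp [hFtdef, max_eq_left ht]
  have hFtnn : ∀ t, 0 ≤ Ft t := fun t => hFnn _ (le_max_right t 0)
  -- Step 1: H₀ ≤ M on [0, ∞)
  have hbound : ∀ t ≥ (0:ℝ), H₀ t ≤ M := by
    intro t₀ ht₀
    by_contra hgt
    push_neg at hgt
    have ht₀pos : 0 < t₀ := by
      rcases ht₀.lt_or_eq with h | h
      · exact h
      · exact absurd (le_max_left (H₀ 0) (α₀ / β)) (by rw [← h] at hgt; exact not_le.2 hgt)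
    set S := Set.Icc (0:ℝ) t₀ ∩ H₀ ⁻¹' Set.Iic M with hS
    have h0S : (0:ℝ) ∈ S := ⟨⟨le_rfl, ht₀⟩, show H₀ 0 ≤ M from le_max_left _ _⟩
    have hSbdd : BddAbove S := ⟨t₀, fun x hx => hx.1.2⟩
    have hSclosed : IsClosed S :=
      (hH₀c.mono (Set.Icc_subset_Ici_self)).preimage_isClosed_of_isClosed isClosed_Icc
        isClosed_Iic
    set s := sSup S with hs
    have hsS : s ∈ S := hSclosed.csSup_mem ⟨0, h0S⟩ hSbdd
    have hs0 : 0 ≤ s := hsS.1.1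
    have hst₀ : s < t₀ := by
      rcases hsS.1.2.lt_or_eq with h | h
      · exact h
      · exact absurd hsS.2 (by rw [h]; exact not_le.2 hgt)
    have hgtS : ∀ x ∈ Set.Ioc s t₀, M < H₀ x := by
      intro x hx
      by_contra hle
      push_neg at hle
      have : x ∈ S := ⟨⟨hs0.trans hx.1.le, hx.2⟩, hle⟩
      exact absurd (le_csSup hSbdd this) (not_le.2 hx.1)
    have hanti : StrictAntiOn H₀ (Set.Icc s t₀) := by
      apply strictAntiOn_of_deriv_neg (convex_Icc s t₀)
        (hH₀c.mono fun x hx => hs0.trans hx.1)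
      intro x hx
      rw [interior_Icc] at hx
      have hx0 : 0 ≤ x := hs0.trans hx.1.le
      rw [(hd0 x hx0).deriv]
      have hMx : M < H₀ x := hgtS x ⟨hx.1, hx.2.le⟩
      have hxpos : 0 < H₀ x := lt_of_lt_of_le (lt_of_lt_of_le (div_pos hα hβ)
        (le_max_right _ _)) hMx.le
      have h1 : (1/2) * H₀' x ≤ α₀ * H₀ x - β * (H₀ x)^2 := by
        have := hi x hx0
        have h2 := mul_le_mul_of_nonneg_left (hFH₀ x hx0) hβ.le
        linarith
      have h3 : α₀ * H₀ x - β * (H₀ x)^2 < 0 := by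
        have : α₀ / β < H₀ x := lt_of_le_of_lt (le_max_right _ _) hMx
        have h4 : α₀ < β * H₀ x := (div_lt_iff₀ hβ).mp this |>.trans_eq (mul_comm _ _)
        nlinarith
      linarith
    have := hanti ⟨le_rfl, hst₀.le⟩ ⟨hst₀.le, le_rfl⟩ hst₀
    have hsM : H₀ s ≤ M := hsS.2
    have := hgt
    linarith
  -- the cumulative integral of F
  set I : ℝ → ℝ := fun t => ∫ x in (0:ℝ)..t, Ft x with hIdef
  have hId : ∀ t, HasDerivAt I (Ft t) t := fun t =>
    (hFtc.integral_hasStrictDerivAt 0 t).hasDerivAt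
  have hIc : Continuous I := by
    have : Differentiable ℝ I := fun t => (hId t).differentiableAt
    exact this.continuous
  have hI0 : I 0 = 0 := by simp [hIdef]
  -- Step 2: β * I T ≤ α₀ * M * T + H₀ 0 / 2
  have hIT : β * I T ≤ α₀ * M * T + H₀ 0 / 2 := by
    set Φ : ℝ → ℝ := fun t => H₀ t / 2 + β * I t - α₀ * M * t with hΦdef
    have hΦd : ∀ t ≥ (0:ℝ), HasDerivAt Φ (H₀' t / 2 + β * Ft t - α₀ * M) t := by
      intro t ht
      have hlin : HasDerivAt (fun t : ℝ => α₀ * M * t) (α₀ * M) t := by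
        simpa using (hasDerivAt_id t).const_mul (α₀ * M)
      exact (((hd0 t ht).div_const 2).add ((hId t).const_mul β)).sub hlin
    have hΦanti : AntitoneOn Φ (Set.Icc 0 T) := by
      apply antitoneOn_of_deriv_nonpos (convex_Icc 0 T)
      · exact (((hH₀c.mono Set.Icc_subset_Ici_self).div_const 2).add
          ((continuous_const.mul hIc).continuousOn)).sub
          ((continuous_const.mul continuous_id).continuousOn)
      · intro x hx
        rw [interior_Icc] at hx
        exact (hΦd x hx.1.le).differentiableAt.differentiableWithinAt
      · intro x hx
        rw [interior_Icc] at hx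
        rw [(hΦd x hx.1.le).deriv]
        have h1 := hi x hx.1.le
        have h2 := hbound x hx.1.le
        have h3 := mul_le_mul_of_nonneg_left h2 hα.le
        rw [hFteq x hx.1.le]
        linarith
    have := hΦanti (Set.left_mem_Icc.2 hT.le) ⟨hT.le, le_rfl⟩ hT.le
    have hH₀T := hH₀nn T hT.le
    simp only [hΦdef, hI0] at this
    nlinarith
  -- Step 3: Gronwall for H₁
  have hH₁T : H₁ T ≤ H₁ 0 * Real.exp (2 * α₀ * T + 2 * κ * I T) := by
    set ψ : ℝ → ℝ := fun t => 2 * α₀ * t + 2 * κ * I t with hψdef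
    set G : ℝ → ℝ := fun t => H₁ t * Real.exp (-ψ t) with hGdef
    have hψd : ∀ t, HasDerivAt ψ (2 * α₀ + 2 * κ * Ft t) t := by
      intro t
      exact (((hasDerivAt_id t).const_mul (2 * α₀)).add ((hId t).const_mul (2 * κ))).congr_deriv
        (by ring)
    have hGd : ∀ t ≥ (0:ℝ), HasDerivAt G
        (H₁' t * Real.exp (-ψ t) + H₁ t * (Real.exp (-ψ t) * -(2 * α₀ + 2 * κ * Ft t))) t := by
      intro t ht
      exact (hd1 t ht).mul (((hψd t).neg).exp)
    have hGanti : AntitoneOn G (Set.Icc 0 T) := by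
      apply antitoneOn_of_deriv_nonpos (convex_Icc 0 T)
      · have hψc : Continuous ψ := by
          rw [hψdef]
          exact (continuous_const.mul continuous_id).add (continuous_const.mul hIc)
        exact (hH₁c.mono Set.Icc_subset_Ici_self).mul
          ((Real.continuous_exp.comp hψc.neg).continuousOn)
      · intro x hx
        rw [interior_Icc] at hx
        exact (hGd x hx.1.le).differentiableAt.differentiableWithinAt
      · intro x hx
        rw [interior_Icc] at hx
        rw [(hGd x hx.1.le).deriv]
        have h1 := hii x hx.1.le
        have h2 : H₁' x ≤ 2 * (α₀ + κ * F x) * H₁ x := by linarith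
        have hexp : 0 < Real.exp (-ψ x) := Real.exp_pos _
        rw [hFteq x hx.1.le]
        have : H₁' x * Real.exp (-ψ x) + H₁ x * (Real.exp (-ψ x) * -(2 * α₀ + 2 * κ * F x))
            = (H₁' x - 2 * (α₀ + κ * F x) * H₁ x) * Real.exp (-ψ x) := by ring
        rw [this]
        exact mul_nonpos_of_nonpos_of_nonneg (by linarith) hexp.le
    have hGT := hGanti (Set.left_mem_Icc.2 hT.le) ⟨hT.le, le_rfl⟩ hT.le
    have hG0 : G 0 = H₁ 0 := by simp [hGdef, hψdef, hI0]
    have : H₁ T * Real.exp (-ψ T) ≤ H₁ 0 := by rw [← hG0]; exact hGT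
    calc H₁ T = H₁ T * Real.exp (-ψ T) * Real.exp (ψ T) := by
          rw [mul_assoc, ← Real.exp_add]; simp
      _ ≤ H₁ 0 * Real.exp (ψ T) :=
          mul_le_mul_of_nonneg_right this (Real.exp_pos _).le
  refine hH₁T.trans ?_
  apply mul_le_mul_of_nonneg_left _ (hH₁nn 0 le_rfl)
  apply Real.exp_le_exp.2
  have : 2 * κ * I T ≤ (2 * κ / β) * (α₀ * M * T + H₀ 0 / 2) := by
    rw [div_mul_eq_mul_div, le_div_iff₀ hβ]
    calc 2 * κ * I T * β = 2 * κ * (β * I T) := by ring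
      _ ≤ 2 * κ * (α₀ * M * T + H₀ 0 / 2) :=
          mul_le_mul_of_nonneg_left hIT (by positivity)
  linarith
end

section
/- Let a > 0, b > 0 and p > 1 be constants and let T > 0. Suppose H : [0,T] → ℝ is differentiable and strictly positive, and G, W : [0,T] → ℝ are continuous and nonnegative, with (1/2)·H'(t) ≤ a·H(t) − b·G(t) + W(t) for all t ∈ [0,T]. Then the time average satisfies ⟨G/H^p⟩_T ≤ (1/b)·[ a·⟨H^{1−p}⟩_T + ⟨W/H^p⟩_T + (1/(2T(p−1)))·( H(T)^{1−p} − H(0)^{1−p} ) ]. -/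
/-!
For `p > 1` the function `H ^ (1 - p)` has derivative `(1 - p) H' H ^ (-p)`, so multiplying the
differential inequality by `2 (p - 1) H ^ (-p) > 0` turns it into
`2 (p - 1) (b G / H ^ p - a H ^ (1 - p) - W / H ^ p) ≤ (H ^ (1 - p))'`.
Integrating over `[0, T]` and dividing by `b T` gives the bound.
-/

open Set MeasureTheory intervalIntegral

lemma ladder_pointwise_le {a b p h h' g w : ℝ} (hh : 0 < h) (hp : 1 < p)
    (hineq : (1 / 2) * h' ≤ a * h - b * g + w) :
    b * (g / h ^ p) - a * h ^ (1 - p) - w / h ^ p ≤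
      h' * (1 - p) * h ^ (1 - p - 1) / (2 * (p - 1)) := by
  rw [show 1 - p - 1 = -p by ring, show 1 - p = 1 + -p by ring, Real.rpow_add hh,
    Real.rpow_one, Real.rpow_neg hh.le, le_div_iff₀ (by linarith)]
  simp only [div_eq_mul_inv]
  have hu : 0 ≤ (p - 1) * (h ^ p)⁻¹ :=
    mul_nonneg (sub_nonneg.2 hp.le) (inv_nonneg.2 (Real.rpow_nonneg hh.le p))
  nlinarith [mul_le_mul_of_nonneg_left hineq hu]

theorem integral_ladder_le {a b p t₀ t₁ : ℝ} (hp : 1 < p) (ht : t₀ ≤ t₁) {H H' G W : ℝ → ℝ}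
    (hderiv : ∀ t ∈ Icc t₀ t₁, HasDerivAt H (H' t) t)
    (hHpos : ∀ t ∈ Icc t₀ t₁, 0 < H t)
    (hGc : ContinuousOn G (Icc t₀ t₁)) (hWc : ContinuousOn W (Icc t₀ t₁))
    (hineq : ∀ t ∈ Icc t₀ t₁, (1 / 2) * H' t ≤ a * H t - b * G t + W t) :
    b * ∫ τ in t₀..t₁, G τ / H τ ^ p ≤
      a * (∫ τ in t₀..t₁, H τ ^ (1 - p)) + (∫ τ in t₀..t₁, W τ / H τ ^ p) +
        (H t₁ ^ (1 - p) - H t₀ ^ (1 - p)) / (2 * (p - 1)) := by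
  have hHc : ContinuousOn H (Icc t₀ t₁) := fun t ht ↦
    (hderiv t ht).continuousAt.continuousWithinAt
  have hHpc : ContinuousOn (fun τ ↦ H τ ^ p) (Icc t₀ t₁) :=
    hHc.rpow_const fun t ht ↦ Or.inl (hHpos t ht).ne'
  have hH1pc : ContinuousOn (fun τ ↦ H τ ^ (1 - p)) (Icc t₀ t₁) :=
    hHc.rpow_const fun t ht ↦ Or.inl (hHpos t ht).ne'
  have hHp_ne : ∀ t ∈ Icc t₀ t₁, H t ^ p ≠ 0 := fun t ht ↦
    (Real.rpow_pos_of_pos (hHpos t ht) p).ne'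
  have hGi : IntervalIntegrable (fun τ ↦ G τ / H τ ^ p) volume t₀ t₁ :=
    (hGc.div hHpc hHp_ne).intervalIntegrable_of_Icc ht
  have hH1pi : IntervalIntegrable (fun τ ↦ H τ ^ (1 - p)) volume t₀ t₁ :=
    hH1pc.intervalIntegrable_of_Icc ht
  have hWi : IntervalIntegrable (fun τ ↦ W τ / H τ ^ p) volume t₀ t₁ :=
    (hWc.div hHpc hHp_ne).intervalIntegrable_of_Icc ht
  have hFTC : (∫ τ in t₀..t₁, b * (G τ / H τ ^ p) - a * H τ ^ (1 - p) - W τ / H τ ^ p) ≤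
      H t₁ ^ (1 - p) / (2 * (p - 1)) - H t₀ ^ (1 - p) / (2 * (p - 1)) := by
    apply integral_le_sub_of_hasDeriv_right_of_le ht (hH1pc.div_const _)
    · intro t ht
      have ht' := Ioo_subset_Icc_self ht
      exact (((hderiv t ht').rpow_const (Or.inl (hHpos t ht').ne')).div_const _).hasDerivWithinAt
    · exact (intervalIntegrable_iff_integrableOn_Icc_of_le ht).1
        (((hGi.const_mul b).sub (hH1pi.const_mul a)).sub hWi)
    · intro t ht
      have ht' := Ioo_subset_Icc_self ht
      exact ladder_pointwise_le (hHpos t ht') hp (hineq t ht')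
  rw [integral_sub ((hGi.const_mul b).sub (hH1pi.const_mul a)) hWi,
    integral_sub (hGi.const_mul b) (hH1pi.const_mul a), intervalIntegral.integral_const_mul,
    intervalIntegral.integral_const_mul] at hFTC
  rw [sub_div]
  linarith

theorem ladder_lemma_general (a b p T : ℝ) (hb : 0 < b) (hp : 1 < p) (hT : 0 < T)
    (H H' G W : ℝ → ℝ)
    (hderiv : ∀ t ∈ Set.Icc (0:ℝ) T, HasDerivAt H (H' t) t)
    (hHpos : ∀ t ∈ Set.Icc (0:ℝ) T, 0 < H t)
    (hGc : ContinuousOn G (Set.Icc (0:ℝ) T))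
    (hWc : ContinuousOn W (Set.Icc (0:ℝ) T))
    (hineq : ∀ t ∈ Set.Icc (0:ℝ) T, (1/2) * H' t ≤ a * H t - b * G t + W t) :
    (1/T) * ∫ τ in (0:ℝ)..T, G τ / H τ ^ p ≤
      (1/b) * (a * ((1/T) * ∫ τ in (0:ℝ)..T, H τ ^ (1 - p)) +
        (1/T) * (∫ τ in (0:ℝ)..T, W τ / H τ ^ p) +
        (1/(2*T*(p-1))) * (H T ^ (1 - p) - H 0 ^ (1 - p))) := by
  have key := integral_ladder_le hp hT.le hderiv hHpos hGc hWc hineq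
  have hp1 : p - 1 ≠ 0 := by linarith
  calc (1 / T) * ∫ τ in (0:ℝ)..T, G τ / H τ ^ p
      = 1 / (b * T) * (b * ∫ τ in (0:ℝ)..T, G τ / H τ ^ p) := by field_simp
    _ ≤ 1 / (b * T) * (a * (∫ τ in (0:ℝ)..T, H τ ^ (1 - p)) +
          (∫ τ in (0:ℝ)..T, W τ / H τ ^ p) + (H T ^ (1 - p) - H 0 ^ (1 - p)) / (2 * (p - 1))) :=
        mul_le_mul_of_nonneg_left key (by positivity)
    _ = _ := by field_simp

/-- The generic ladder lemma: if `H > 0` is differentiable,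
`G, W ≥ 0` are continuous, `p > 1`, and `(1/2)·H' ≤ a·H − b·G + W` on `[0,T]`,
then `⟨G/Hᵖ⟩_T ≤ (1/b)·[a·⟨H^{1−p}⟩_T + ⟨W/Hᵖ⟩_T
  + (1/(2T(p−1)))·(H(T)^{1−p} − H(0)^{1−p})]`. -/
theorem ladder_lemma (a b p T : ℝ) (ha : 0 < a) (hb : 0 < b) (hp : 1 < p) (hT : 0 < T)
    (H H' G W : ℝ → ℝ)
    (hderiv : ∀ t ∈ Set.Icc (0:ℝ) T, HasDerivAt H (H' t) t)
    (hHpos : ∀ t ∈ Set.Icc (0:ℝ) T, 0 < H t)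
    (hGc : ContinuousOn G (Set.Icc (0:ℝ) T))
    (hWc : ContinuousOn W (Set.Icc (0:ℝ) T))
    (hGnn : ∀ t ∈ Set.Icc (0:ℝ) T, 0 ≤ G t)
    (hWnn : ∀ t ∈ Set.Icc (0:ℝ) T, 0 ≤ W t)
    (hineq : ∀ t ∈ Set.Icc (0:ℝ) T, (1/2) * H' t ≤ a * H t - b * G t + W t) :
    (1/T) * ∫ τ in (0:ℝ)..T, G τ / H τ ^ p ≤
      (1/b) * (a * ((1/T) * ∫ τ in (0:ℝ)..T, H τ ^ (1 - p)) +
        (1/T) * (∫ τ in (0:ℝ)..T, W τ / H τ ^ p) +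
        (1/(2*T*(p-1))) * (H T ^ (1 - p) - H 0 ^ (1 - p))) :=
  ladder_lemma_general a b p T hb hp hT H H' G W hderiv hHpos hGc hWc hineq
end

section
/- Let α₀ > 0, Re > 0, κ > 0 and A₀ > 0 be constants and let T > 0. Suppose H₁ : [0,T] → ℝ is differentiable and strictly positive, and H₂, F : [0,T] → ℝ are continuous and nonnegative, satisfying: (i) (1/2)·H₁'(t) ≤ α₀·H₁(t) − (1/2)·Re⁻¹·H₂(t) + κ·F(t)·H₁(t) for all t ∈ [0,T]; (ii) ⟨F⟩_T ≤ A₀²; and (iii) ⟨H₁⟩_T ≤ α₀·A₀·Re. Then ⟨H₂^{1/2}⟩_T ≤ [ 2·Re·(α₀ + κ·A₀²) + (Re/T)·ln( H₁(0)/H₁(T) ) ]^{1/2} · ( α₀·A₀·Re )^{1/2}. -/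
/-!
By Cauchy–Schwarz, `⟨H₂^{1/2}⟩_T = ⟨(H₂/H₁)^{1/2} H₁^{1/2}⟩_T ≤ ⟨H₂/H₁⟩_T^{1/2} ⟨H₁⟩_T^{1/2}`.
The second factor is the enstrophy bound (iii). For the first, divide the differential
inequality (i) by `H₁ > 0`: it becomes `(log H₁)' ≤ 2α₀ + 2κF - Re⁻¹ H₂/H₁`, and integrating over
`[0, T]` bounds `⟨H₂/H₁⟩_T` by `2Re(α₀ + κ⟨F⟩_T) + (Re/T) log(H₁(0)/H₁(T))`, to which (ii) applies.
-/

open MeasureTheory Set Real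

theorem integral_sqrt_mul_le_sqrt_mul_sqrt {α : Type*} [MeasurableSpace α] {μ : Measure α}
    {f g : α → ℝ} (hf0 : 0 ≤ᵐ[μ] f) (hg0 : 0 ≤ᵐ[μ] g) (hf : Integrable f μ)
    (hg : Integrable g μ) :
    ∫ x, √(f x * g x) ∂μ ≤ √(∫ x, f x ∂μ) * √(∫ x, g x ∂μ) := by
  have memLp_sqrt {h : α → ℝ} (h0 : 0 ≤ᵐ[μ] h) (hh : Integrable h μ) :
      MemLp (fun x => √(h x)) (ENNReal.ofReal 2) μ := by
    rw [ENNReal.ofReal_ofNat, memLp_two_iff_integrable_sq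
      (continuous_sqrt.comp_aestronglyMeasurable hh.aestronglyMeasurable)]
    refine hh.congr ?_
    filter_upwards [h0] with x hx using (sq_sqrt hx).symm
  have integral_sqrt_sq {h : α → ℝ} (h0 : 0 ≤ᵐ[μ] h) :
      ∫ x, √(h x) ^ (2 : ℝ) ∂μ = ∫ x, h x ∂μ := by
    refine integral_congr_ae ?_
    filter_upwards [h0] with x hx using by rw [rpow_two, sq_sqrt hx]
  have holder := integral_mul_le_Lp_mul_Lq_of_nonneg HolderConjugate.two_two
    (Filter.Eventually.of_forall fun x => sqrt_nonneg (f x))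
    (Filter.Eventually.of_forall fun x => sqrt_nonneg (g x))
    (memLp_sqrt hf0 hf) (memLp_sqrt hg0 hg)
  rw [integral_sqrt_sq hf0, integral_sqrt_sq hg0, ← sqrt_eq_rpow, ← sqrt_eq_rpow] at holder
  refine le_of_eq_of_le (integral_congr_ae ?_) holder
  filter_upwards [hf0] with x hx using sqrt_mul hx (g x)

theorem intervalIntegral.integral_sqrt_mul_le_sqrt_mul_sqrt {a b : ℝ} (hab : a ≤ b)
    {f g : ℝ → ℝ} (hf0 : ∀ x ∈ Ioc a b, 0 ≤ f x) (hg0 : ∀ x ∈ Ioc a b, 0 ≤ g x)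
    (hf : IntervalIntegrable f volume a b) (hg : IntervalIntegrable g volume a b) :
    ∫ x in a..b, √(f x * g x) ≤ √(∫ x in a..b, f x) * √(∫ x in a..b, g x) := by
  simp only [intervalIntegral.integral_of_le hab]
  exact _root_.integral_sqrt_mul_le_sqrt_mul_sqrt
    (ae_restrict_of_forall_mem measurableSet_Ioc hf0)
    (ae_restrict_of_forall_mem measurableSet_Ioc hg0) hf.1 hg.1

theorem log_sub_log_le_integral_of_deriv_div_le {H H' φ : ℝ → ℝ} {a b : ℝ} (hab : a ≤ b)
    (hd : ∀ t ∈ Icc a b, HasDerivAt H (H' t) t) (hpos : ∀ t ∈ Icc a b, 0 < H t)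
    (hφ : IntervalIntegrable φ volume a b) (hle : ∀ t ∈ Ioo a b, H' t / H t ≤ φ t) :
    log (H b) - log (H a) ≤ ∫ t in a..b, φ t :=
  intervalIntegral.sub_le_integral_of_hasDeriv_right_of_le hab
    (fun t ht => ((hd t ht).continuousAt.log (hpos t ht).ne').continuousWithinAt)
    (fun t ht => ((hd t (Ioo_subset_Icc_self ht)).log
      (hpos t (Ioo_subset_Icc_self ht)).ne').hasDerivWithinAt)
    ((intervalIntegrable_iff_integrableOn_Icc_of_le hab).mp hφ) hle

theorem integral_div_le_of_vorticity_ineq {α₀ Re κ a b : ℝ} (hRe : 0 < Re) (hab : a ≤ b)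
    {H₁ H₁' H₂ F : ℝ → ℝ} (hd : ∀ t ∈ Icc a b, HasDerivAt H₁ (H₁' t) t)
    (hpos : ∀ t ∈ Icc a b, 0 < H₁ t) (hH₂ : IntervalIntegrable H₂ volume a b)
    (hF : IntervalIntegrable F volume a b)
    (hi : ∀ t ∈ Ioo a b,
      (1/2) * H₁' t ≤ α₀ * H₁ t - (1/2) * Re⁻¹ * H₂ t + κ * F t * H₁ t) :
    ∫ t in a..b, H₂ t / H₁ t ≤
      Re * (2 * α₀ * (b - a) + 2 * κ * (∫ t in a..b, F t) + log (H₁ a / H₁ b)) := by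
  have hratio : IntervalIntegrable (fun t => H₂ t / H₁ t) volume a b := by
    refine hH₂.mul_continuousOn (ContinuousOn.inv₀ (fun t ht => ?_) fun t ht => ?_) <;>
      rw [uIcc_of_le hab] at ht
    · exact (hd t ht).continuousAt.continuousWithinAt
    · exact (hpos t ht).ne'
  have hlog := log_sub_log_le_integral_of_deriv_div_le hab hd hpos
    (φ := fun t => 2 * α₀ + 2 * κ * F t - Re⁻¹ * (H₂ t / H₁ t))
    (((intervalIntegrable_const).add (hF.const_mul _)).sub (hratio.const_mul _))
    (fun t ht => by
      have h := hpos t (Ioo_subset_Icc_self ht)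
      rw [div_le_iff₀ h, sub_mul, add_mul, mul_assoc Re⁻¹, div_mul_cancel₀ _ h.ne']
      linarith [hi t ht])
  rw [intervalIntegral.integral_sub (intervalIntegrable_const.add (hF.const_mul _))
    (hratio.const_mul _), intervalIntegral.integral_add intervalIntegrable_const
    (hF.const_mul _), intervalIntegral.integral_const, intervalIntegral.integral_const_mul,
    intervalIntegral.integral_const_mul, smul_eq_mul] at hlog
  have key : Re⁻¹ * ∫ t in a..b, H₂ t / H₁ t ≤
      2 * α₀ * (b - a) + 2 * κ * (∫ t in a..b, F t) + (log (H₁ a) - log (H₁ b)) := by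
    linarith
  rwa [inv_mul_le_iff₀ hRe, ← log_div (hpos a ⟨le_rfl, hab⟩).ne' (hpos b ⟨hab, le_rfl⟩).ne']
    at key

theorem toner_tu_2d_P21_estimate_general (α₀ Re κ A₀ T : ℝ)
    (hRe : 0 < Re) (hκ : 0 < κ) (hT : 0 < T)
    (H₁ H₁' H₂ F : ℝ → ℝ)
    (hd1 : ∀ t ∈ Set.Icc (0:ℝ) T, HasDerivAt H₁ (H₁' t) t)
    (hH₁pos : ∀ t ∈ Set.Icc (0:ℝ) T, 0 < H₁ t)
    (hH₂c : ContinuousOn H₂ (Set.Icc (0:ℝ) T))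
    (hFc : ContinuousOn F (Set.Icc (0:ℝ) T))
    (hH₂nn : ∀ t ∈ Set.Icc (0:ℝ) T, 0 ≤ H₂ t)
    (hi : ∀ t ∈ Set.Icc (0:ℝ) T,
      (1/2) * H₁' t ≤ α₀ * H₁ t - (1/2) * Re⁻¹ * H₂ t + κ * F t * H₁ t)
    (hii : (1/T) * ∫ τ in (0:ℝ)..T, F τ ≤ A₀^2)
    (hiii : (1/T) * ∫ τ in (0:ℝ)..T, H₁ τ ≤ α₀ * A₀ * Re) :
    (1/T) * ∫ τ in (0:ℝ)..T, (H₂ τ) ^ ((1:ℝ)/2) ≤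
      (2 * Re * (α₀ + κ * A₀^2) + (Re/T) * Real.log (H₁ 0 / H₁ T)) ^ ((1:ℝ)/2) *
        (α₀ * A₀ * Re) ^ ((1:ℝ)/2) := by
  have hH₁c : ContinuousOn H₁ (Icc 0 T) := fun t ht => (hd1 t ht).continuousAt.continuousWithinAt
  have hratio := integral_div_le_of_vorticity_ineq hRe hT.le hd1 hH₁pos
    (hH₂c.intervalIntegrable_of_Icc hT.le) (hFc.intervalIntegrable_of_Icc hT.le)
    fun t ht => hi t (Ioo_subset_Icc_self ht)
  have hratio_avg : (1/T) * ∫ τ in (0:ℝ)..T, H₂ τ / H₁ τ ≤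
      2 * Re * (α₀ + κ * A₀^2) + (Re/T) * log (H₁ 0 / H₁ T) := by
    have hκF := mul_le_mul_of_nonneg_left hii hκ.le
    calc (1/T) * ∫ τ in (0:ℝ)..T, H₂ τ / H₁ τ
        ≤ (1/T) * (Re * (2 * α₀ * (T - 0) + 2 * κ * (∫ τ in (0:ℝ)..T, F τ)
          + log (H₁ 0 / H₁ T))) := by gcongr
      _ = 2 * Re * (α₀ + κ * ((1/T) * ∫ τ in (0:ℝ)..T, F τ)) + (Re/T) * log (H₁ 0 / H₁ T) := by
        field_simp; ring
      _ ≤ _ := by gcongr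
  have hsplit : ∫ τ in (0:ℝ)..T, H₂ τ ^ ((1:ℝ)/2) = ∫ τ in (0:ℝ)..T, √(H₂ τ / H₁ τ * H₁ τ) := by
    refine intervalIntegral.integral_congr fun t ht => ?_
    rw [uIcc_of_le hT.le] at ht
    rw [div_mul_cancel₀ _ (hH₁pos t ht).ne', sqrt_eq_rpow]
  have hCS := intervalIntegral.integral_sqrt_mul_le_sqrt_mul_sqrt hT.le
    (fun t ht => div_nonneg (hH₂nn t (Ioc_subset_Icc_self ht))
      (hH₁pos t (Ioc_subset_Icc_self ht)).le)
    (fun t ht => (hH₁pos t (Ioc_subset_Icc_self ht)).le)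
    ((hH₂c.div hH₁c fun t ht => (hH₁pos t ht).ne').intervalIntegrable_of_Icc hT.le)
    (hH₁c.intervalIntegrable_of_Icc hT.le)
  have hT' : (0:ℝ) ≤ 1/T := by positivity
  rw [← sqrt_eq_rpow, ← sqrt_eq_rpow, hsplit]
  calc (1/T) * ∫ τ in (0:ℝ)..T, √(H₂ τ / H₁ τ * H₁ τ)
      ≤ (1/T) * (√(∫ τ in (0:ℝ)..T, H₂ τ / H₁ τ) * √(∫ τ in (0:ℝ)..T, H₁ τ)) := by gcongr
    _ = √((1/T) * ∫ τ in (0:ℝ)..T, H₂ τ / H₁ τ) * √((1/T) * ∫ τ in (0:ℝ)..T, H₁ τ) := by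
      rw [sqrt_mul hT', sqrt_mul hT', mul_mul_mul_comm, mul_self_sqrt hT']
    _ ≤ _ := by gcongr

/-- Conditional form of the 2d estimate for `⟨P₂,₁⟩_T = ⟨H₂^{1/2}⟩_T`:
under the vorticity inequality (i), the quartic time-average bound (ii) and the
enstrophy time-average bound (iii), one has
`⟨H₂^{1/2}⟩_T ≤ [2Re(α₀ + κA₀²) + (Re/T)·ln(H₁(0)/H₁(T))]^{1/2}·(α₀A₀Re)^{1/2}`. -/
theorem toner_tu_2d_P21_estimate (α₀ Re κ A₀ T : ℝ)
    (hα : 0 < α₀) (hRe : 0 < Re) (hκ : 0 < κ) (hA : 0 < A₀) (hT : 0 < T)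
    (H₁ H₁' H₂ F : ℝ → ℝ)
    (hd1 : ∀ t ∈ Set.Icc (0:ℝ) T, HasDerivAt H₁ (H₁' t) t)
    (hH₁pos : ∀ t ∈ Set.Icc (0:ℝ) T, 0 < H₁ t)
    (hH₂c : ContinuousOn H₂ (Set.Icc (0:ℝ) T))
    (hFc : ContinuousOn F (Set.Icc (0:ℝ) T))
    (hH₂nn : ∀ t ∈ Set.Icc (0:ℝ) T, 0 ≤ H₂ t)
    (hFnn : ∀ t ∈ Set.Icc (0:ℝ) T, 0 ≤ F t)
    (hi : ∀ t ∈ Set.Icc (0:ℝ) T,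
      (1/2) * H₁' t ≤ α₀ * H₁ t - (1/2) * Re⁻¹ * H₂ t + κ * F t * H₁ t)
    (hii : (1/T) * ∫ τ in (0:ℝ)..T, F τ ≤ A₀^2)
    (hiii : (1/T) * ∫ τ in (0:ℝ)..T, H₁ τ ≤ α₀ * A₀ * Re) :
    (1/T) * ∫ τ in (0:ℝ)..T, (H₂ τ) ^ ((1:ℝ)/2) ≤
      (2 * Re * (α₀ + κ * A₀^2) + (Re/T) * Real.log (H₁ 0 / H₁ T)) ^ ((1:ℝ)/2) *
        (α₀ * A₀ * Re) ^ ((1:ℝ)/2) :=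
  toner_tu_2d_P21_estimate_general α₀ Re κ A₀ T hRe hκ hT H₁ H₁' H₂ F hd1 hH₁pos hH₂c hFc hH₂nn hi
    hii hiii
end

section
/- Let α₀ > 0, Re > 0 and K > 0 be constants and let T > 0. Suppose H₁ : [0,T] → ℝ is differentiable and strictly positive, and H₂ : [0,T] → ℝ is continuous and nonnegative, satisfying (1/2)·H₁'(t) ≤ α₀·H₁(t) − (1/2)·Re⁻¹·H₂(t) + K·H₁(t)³ for all t ∈ [0,T]. Then ⟨H₂^{1/3}⟩_T ≤ [ 2·Re·( α₀·⟨1/H₁⟩_T + K·⟨H₁⟩_T ) + (Re/T)·( 1/H₁(T) − 1/H₁(0) ) ]^{1/3} · ( ⟨H₁⟩_T )^{2/3}. -/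
/-!
Dividing the differential inequality by `H₁²` turns it into
`Re · (-1/H₁)' ≤ 2 Re (α₀/H₁ + K H₁) - H₂/H₁²`, whose left side integrates to boundary terms;
this bounds `∫ H₂/H₁²`. Hölder's inequality with exponents `3` and `3/2`, applied to the
factorisation `H₂^{1/3} = (H₂/H₁²)^{1/3} · H₁^{2/3}`, then gives the estimate.
-/

open MeasureTheory Set

theorem MeasureTheory.integral_mul_rpow_le {α : Type*} [MeasurableSpace α] {μ : Measure α}
    {f g : α → ℝ} (hf : Integrable f μ) (hg : Integrable g μ) (hf0 : 0 ≤ᵐ[μ] f)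
    (hg0 : 0 ≤ᵐ[μ] g) {p q : ℝ} (hp : 0 ≤ p) (hq : 0 ≤ q) (hpq : p + q = 1) :
    ∫ a, f a ^ p * g a ^ q ∂μ ≤ (∫ a, f a ∂μ) ^ p * (∫ a, g a ∂μ) ^ q := by
  have hfg0 : 0 ≤ᵐ[μ] fun a => f a ^ p * g a ^ q := by
    filter_upwards [hf0, hg0] with a hfa hga
    exact mul_nonneg (Real.rpow_nonneg hfa p) (Real.rpow_nonneg hga q)
  have hofReal : (fun a => ENNReal.ofReal (f a ^ p * g a ^ q)) =ᵐ[μ]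
      fun a => ENNReal.ofReal (f a) ^ p * ENNReal.ofReal (g a) ^ q := by
    filter_upwards [hf0, hg0] with a hfa hga
    rw [ENNReal.ofReal_mul (Real.rpow_nonneg hfa p), ENNReal.ofReal_rpow_of_nonneg hfa hp,
      ENNReal.ofReal_rpow_of_nonneg hga hq]
  rw [integral_eq_lintegral_of_nonneg_ae hfg0
      ((hf.1.aemeasurable.pow_const p).mul (hg.1.aemeasurable.pow_const q)).aestronglyMeasurable,
    integral_eq_lintegral_of_nonneg_ae hf0 hf.1, integral_eq_lintegral_of_nonneg_ae hg0 hg.1,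
    ENNReal.toReal_rpow, ENNReal.toReal_rpow, ← ENNReal.toReal_mul, lintegral_congr_ae hofReal]
  refine ENNReal.toReal_mono ?_ (ENNReal.lintegral_mul_norm_pow_le
    hf.1.aemeasurable.ennreal_ofReal hg.1.aemeasurable.ennreal_ofReal hp hq hpq)
  exact ENNReal.mul_ne_top (ENNReal.rpow_ne_top_of_nonneg hp hf.lintegral_lt_top.ne)
    (ENNReal.rpow_ne_top_of_nonneg hq hg.lintegral_lt_top.ne)

theorem intervalIntegral.integral_mul_rpow_le {f g : ℝ → ℝ} {a b p q : ℝ} (hab : a ≤ b)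
    (hf : IntervalIntegrable f volume a b) (hg : IntervalIntegrable g volume a b)
    (hf0 : ∀ t ∈ Ioc a b, 0 ≤ f t) (hg0 : ∀ t ∈ Ioc a b, 0 ≤ g t)
    (hp : 0 ≤ p) (hq : 0 ≤ q) (hpq : p + q = 1) :
    ∫ t in a..b, f t ^ p * g t ^ q ≤ (∫ t in a..b, f t) ^ p * (∫ t in a..b, g t) ^ q := by
  simp only [intervalIntegral.integral_of_le hab]
  exact MeasureTheory.integral_mul_rpow_le hf.1 hg.1
    (ae_restrict_of_forall_mem measurableSet_Ioc hf0)
    (ae_restrict_of_forall_mem measurableSet_Ioc hg0) hp hq hpq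

theorem Real.rpow_eq_div_pow_rpow_mul_rpow {x y : ℝ} (hx : 0 < x) (hy : 0 ≤ y) (n : ℕ) (p : ℝ) :
    y ^ p = (y / x ^ n) ^ p * x ^ (n * p) := by
  rw [Real.div_rpow hy (by positivity), ← Real.rpow_natCast, ← Real.rpow_mul hx.le,
    div_mul_cancel₀ _ (by positivity)]

theorem mul_rpow_mul_rpow_of_add_eq_one {c x y p q : ℝ} (hc : 0 ≤ c) (hx : 0 ≤ x) (hy : 0 ≤ y)
    (hpq : p + q = 1) : c * (x ^ p * y ^ q) = (c * x) ^ p * (c * y) ^ q := by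
  rw [Real.mul_rpow hc hx, Real.mul_rpow hc hy, mul_mul_mul_comm,
    ← Real.rpow_add' hc (by simp [hpq]), hpq, Real.rpow_one]

theorem integral_rpow_one_third_le {a b : ℝ} {H₁ H₂ : ℝ → ℝ} (hab : a ≤ b)
    (hH₁c : ContinuousOn H₁ (Icc a b)) (hH₁pos : ∀ t ∈ Icc a b, 0 < H₁ t)
    (hH₂c : ContinuousOn H₂ (Icc a b)) (hH₂nn : ∀ t ∈ Icc a b, 0 ≤ H₂ t) :
    ∫ t in a..b, H₂ t ^ ((1:ℝ)/3) ≤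
      (∫ t in a..b, H₂ t / H₁ t ^ 2) ^ ((1:ℝ)/3) * (∫ t in a..b, H₁ t) ^ ((2:ℝ)/3) := by
  have hgc : ContinuousOn (fun t => H₂ t / H₁ t ^ 2) (Icc a b) :=
    hH₂c.div (hH₁c.pow 2) fun t ht => pow_ne_zero 2 (hH₁pos t ht).ne'
  calc ∫ t in a..b, H₂ t ^ ((1:ℝ)/3)
      = ∫ t in a..b, (H₂ t / H₁ t ^ 2) ^ ((1:ℝ)/3) * H₁ t ^ ((2:ℝ)/3) := by
        refine intervalIntegral.integral_congr fun t ht => ?_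
        rw [uIcc_of_le hab] at ht
        rw [Real.rpow_eq_div_pow_rpow_mul_rpow (hH₁pos t ht) (hH₂nn t ht) 2]
        norm_num
    _ ≤ _ := by
        refine intervalIntegral.integral_mul_rpow_le hab (hgc.intervalIntegrable_of_Icc hab)
          (hH₁c.intervalIntegrable_of_Icc hab) (fun t ht => ?_) (fun t ht => ?_)
          (by norm_num) (by norm_num) (by norm_num)
        · have ht := Ioc_subset_Icc_self ht
          exact div_nonneg (hH₂nn t ht) (pow_nonneg (hH₁pos t ht).le 2)
        · exact (hH₁pos t (Ioc_subset_Icc_self ht)).le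

theorem mul_inv_sub_inv_le_integral {H H' φ : ℝ → ℝ} {a b c : ℝ} (hab : a ≤ b)
    (hH : ∀ t ∈ Icc a b, HasDerivAt H (H' t) t) (hH0 : ∀ t ∈ Icc a b, H t ≠ 0)
    (hφ : IntegrableOn φ (Icc a b)) (hle : ∀ t ∈ Ioo a b, c * (H' t / H t ^ 2) ≤ φ t) :
    c * ((H a)⁻¹ - (H b)⁻¹) ≤ ∫ t in a..b, φ t := by
  have hderiv : ∀ t ∈ Icc a b,
      HasDerivAt (fun s => -(c * (H s)⁻¹)) (c * (H' t / H t ^ 2)) t := fun t ht => by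
    simpa [neg_div, mul_neg] using (((hH t ht).fun_inv (hH0 t ht)).const_mul c).fun_neg
  have := intervalIntegral.sub_le_integral_of_hasDeriv_right_of_le hab
    (fun t ht => (hderiv t ht).continuousAt.continuousWithinAt)
    (fun t ht => (hderiv t (Ioo_subset_Icc_self ht)).hasDerivWithinAt) hφ hle
  linarith

theorem mul_div_sq_le_of_enstrophy_ineq {α₀ Re K x x' y : ℝ} (hRe : 0 < Re) (hx : 0 < x)
    (h : (1/2) * x' ≤ α₀ * x - (1/2) * Re⁻¹ * y + K * x ^ 3) :
    Re * (x' / x ^ 2) ≤ 2 * Re * (α₀ * (1 / x) + K * x) - y / x ^ 2 := by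
  have h' : Re * x' ≤ 2 * Re * α₀ * x + 2 * Re * K * x ^ 3 - y := by
    have := mul_le_mul_of_nonneg_left h (by positivity : (0:ℝ) ≤ 2 * Re)
    field_simp at this
    linarith
  have hsplit : 2 * Re * (α₀ * (1 / x) + K * x) - y / x ^ 2 - Re * (x' / x ^ 2)
      = (2 * Re * α₀ * x + 2 * Re * K * x ^ 3 - y - Re * x') / x ^ 2 := by
    field_simp
  rw [← sub_nonneg, hsplit]
  exact div_nonneg (by linarith) (by positivity)

theorem integral_div_sq_le_of_enstrophy_ineq {α₀ Re K a b : ℝ} {H₁ H₁' H₂ : ℝ → ℝ}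
    (hRe : 0 < Re) (hab : a ≤ b)
    (hd1 : ∀ t ∈ Icc a b, HasDerivAt H₁ (H₁' t) t) (hH₁pos : ∀ t ∈ Icc a b, 0 < H₁ t)
    (hH₂c : ContinuousOn H₂ (Icc a b))
    (hineq : ∀ t ∈ Icc a b, (1/2) * H₁' t ≤ α₀ * H₁ t - (1/2) * Re⁻¹ * H₂ t + K * H₁ t ^ 3) :
    ∫ t in a..b, H₂ t / H₁ t ^ 2 ≤
      2 * Re * (α₀ * (∫ t in a..b, 1 / H₁ t) + K * ∫ t in a..b, H₁ t) +
        Re * (1 / H₁ b - 1 / H₁ a) := by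
  have hH₁c : ContinuousOn H₁ (Icc a b) := fun t ht => (hd1 t ht).continuousAt.continuousWithinAt
  have hinvc : ContinuousOn (fun t => 1 / H₁ t) (Icc a b) :=
    continuousOn_const.div hH₁c fun t ht => (hH₁pos t ht).ne'
  have hgc : ContinuousOn (fun t => H₂ t / H₁ t ^ 2) (Icc a b) :=
    hH₂c.div (hH₁c.pow 2) fun t ht => pow_ne_zero 2 (hH₁pos t ht).ne'
  have hψc : ContinuousOn (fun t => 2 * Re * (α₀ * (1 / H₁ t) + K * H₁ t)) (Icc a b) :=
    continuousOn_const.mul ((continuousOn_const.mul hinvc).add (continuousOn_const.mul hH₁c))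
  have key := mul_inv_sub_inv_le_integral
    (φ := fun t => 2 * Re * (α₀ * (1 / H₁ t) + K * H₁ t) - H₂ t / H₁ t ^ 2) hab hd1
    (fun t ht => (hH₁pos t ht).ne') (hψc.sub hgc).integrableOn_Icc fun t ht =>
      mul_div_sq_le_of_enstrophy_ineq hRe (hH₁pos t (Ioo_subset_Icc_self ht))
        (hineq t (Ioo_subset_Icc_self ht))
  rw [intervalIntegral.integral_sub (hψc.intervalIntegrable_of_Icc hab)
      (hgc.intervalIntegrable_of_Icc hab), intervalIntegral.integral_const_mul,
    intervalIntegral.integral_add ((hinvc.intervalIntegrable_of_Icc hab).const_mul α₀)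
      ((hH₁c.intervalIntegrable_of_Icc hab).const_mul K),
    intervalIntegral.integral_const_mul, intervalIntegral.integral_const_mul] at key
  rw [one_div, one_div]
  linarith

theorem toner_tu_3d_Q21_estimate_general (α₀ Re K T : ℝ)
    (hRe : 0 < Re) (hT : 0 < T)
    (H₁ H₁' H₂ : ℝ → ℝ)
    (hd1 : ∀ t ∈ Set.Icc (0:ℝ) T, HasDerivAt H₁ (H₁' t) t)
    (hH₁pos : ∀ t ∈ Set.Icc (0:ℝ) T, 0 < H₁ t)
    (hH₂c : ContinuousOn H₂ (Set.Icc (0:ℝ) T))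
    (hH₂nn : ∀ t ∈ Set.Icc (0:ℝ) T, 0 ≤ H₂ t)
    (hineq : ∀ t ∈ Set.Icc (0:ℝ) T,
      (1/2) * H₁' t ≤ α₀ * H₁ t - (1/2) * Re⁻¹ * H₂ t + K * (H₁ t)^3) :
    (1/T) * ∫ τ in (0:ℝ)..T, (H₂ τ) ^ ((1:ℝ)/3) ≤
      (2 * Re * (α₀ * ((1/T) * ∫ τ in (0:ℝ)..T, 1 / H₁ τ) +
          K * ((1/T) * ∫ τ in (0:ℝ)..T, H₁ τ)) +
        (Re/T) * (1 / H₁ T - 1 / H₁ 0)) ^ ((1:ℝ)/3) *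
      ((1/T) * ∫ τ in (0:ℝ)..T, H₁ τ) ^ ((2:ℝ)/3) := by
  have hH₁c : ContinuousOn H₁ (Icc 0 T) := fun t ht => (hd1 t ht).continuousAt.continuousWithinAt
  have hbound := integral_div_sq_le_of_enstrophy_ineq hRe hT.le hd1 hH₁pos hH₂c hineq
  have hg0 : 0 ≤ ∫ τ in (0:ℝ)..T, H₂ τ / H₁ τ ^ 2 := intervalIntegral.integral_nonneg hT.le
    fun t ht => div_nonneg (hH₂nn t ht) (pow_nonneg (hH₁pos t ht).le 2)
  have hH₁0 : 0 ≤ ∫ τ in (0:ℝ)..T, H₁ τ :=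
    intervalIntegral.integral_nonneg hT.le fun t ht => (hH₁pos t ht).le
  calc (1/T) * ∫ τ in (0:ℝ)..T, H₂ τ ^ ((1:ℝ)/3)
      ≤ (1/T) * ((∫ τ in (0:ℝ)..T, H₂ τ / H₁ τ ^ 2) ^ ((1:ℝ)/3) *
          (∫ τ in (0:ℝ)..T, H₁ τ) ^ ((2:ℝ)/3)) := by
        gcongr
        exact integral_rpow_one_third_le hT.le hH₁c hH₁pos hH₂c hH₂nn
    _ = ((1/T) * ∫ τ in (0:ℝ)..T, H₂ τ / H₁ τ ^ 2) ^ ((1:ℝ)/3) *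
          ((1/T) * ∫ τ in (0:ℝ)..T, H₁ τ) ^ ((2:ℝ)/3) :=
        mul_rpow_mul_rpow_of_add_eq_one (by positivity) hg0 hH₁0 (by norm_num)
    _ ≤ _ := by
        gcongr
        calc (1/T) * ∫ τ in (0:ℝ)..T, H₂ τ / H₁ τ ^ 2
            ≤ (1/T) * (2 * Re * (α₀ * (∫ t in (0:ℝ)..T, 1 / H₁ t) + K * ∫ t in (0:ℝ)..T, H₁ t) +
                Re * (1 / H₁ T - 1 / H₁ 0)) := by gcongr
          _ = _ := by ring

/-- Conditional form of the 3d estimate for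
`⟨Q₂,₁⟩_T = ⟨H₂^{1/3}⟩_T`: if `(1/2)·H₁' ≤ α₀·H₁ − (1/2)·Re⁻¹·H₂ + K·H₁³`
on `[0,T]`, then
`⟨H₂^{1/3}⟩_T ≤ [2Re(α₀⟨1/H₁⟩_T + K⟨H₁⟩_T) + (Re/T)(1/H₁(T) − 1/H₁(0))]^{1/3}
  · ⟨H₁⟩_T^{2/3}`. -/
theorem toner_tu_3d_Q21_estimate (α₀ Re K T : ℝ)
    (hα : 0 < α₀) (hRe : 0 < Re) (hK : 0 < K) (hT : 0 < T)
    (H₁ H₁' H₂ : ℝ → ℝ)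
    (hd1 : ∀ t ∈ Set.Icc (0:ℝ) T, HasDerivAt H₁ (H₁' t) t)
    (hH₁pos : ∀ t ∈ Set.Icc (0:ℝ) T, 0 < H₁ t)
    (hH₂c : ContinuousOn H₂ (Set.Icc (0:ℝ) T))
    (hH₂nn : ∀ t ∈ Set.Icc (0:ℝ) T, 0 ≤ H₂ t)
    (hineq : ∀ t ∈ Set.Icc (0:ℝ) T,
      (1/2) * H₁' t ≤ α₀ * H₁ t - (1/2) * Re⁻¹ * H₂ t + K * (H₁ t)^3) :
    (1/T) * ∫ τ in (0:ℝ)..T, (H₂ τ) ^ ((1:ℝ)/3) ≤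
      (2 * Re * (α₀ * ((1/T) * ∫ τ in (0:ℝ)..T, 1 / H₁ τ) +
          K * ((1/T) * ∫ τ in (0:ℝ)..T, H₁ τ)) +
        (Re/T) * (1 / H₁ T - 1 / H₁ 0)) ^ ((1:ℝ)/3) *
      ((1/T) * ∫ τ in (0:ℝ)..T, H₁ τ) ^ ((2:ℝ)/3) :=
  toner_tu_3d_Q21_estimate_general α₀ Re K T hRe hT H₁ H₁' H₂ hd1 hH₁pos hH₂c hH₂nn hineq
end

section
/- Let T > 0 and, for each integer n ≥ 2, let f_n : [0,T] → ℝ be measurable and strictly positive, with f_n^{1/n} and f_{n+1}/f_n integrable on [0,T]. Suppose there exist constants B ≥ 0 and C ≥ 0 such that ⟨f₂^{1/2}⟩_T ≤ B and, for all n ≥ 2, ⟨f_{n+1}/f_n⟩_T ≤ C. Then for every integer n ≥ 2, ⟨f_n^{1/n}⟩_T ≤ C^{(n−2)/n}·B^{2/n}. -/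
/-!
Since `f_{n+1}^{1/(n+1)} = (f_{n+1}/f_n)^{1/(n+1)} · (f_n^{1/n})^{n/(n+1)}` and the two exponents
sum to one, Hölder's inequality bounds `⟨f_{n+1}^{1/(n+1)}⟩_T` by
`⟨f_{n+1}/f_n⟩_T^{1/(n+1)} · ⟨f_n^{1/n}⟩_T^{n/(n+1)}`. Feeding in `⟨f_{n+1}/f_n⟩_T ≤ C`
and the bound for `n`, the exponents of `C` and `B` become `(1 + (n - 2))/(n + 1)` and `2/(n + 1)`.
-/

open MeasureTheory Set
open scoped Interval

theorem div_rpow_mul_rpow_rpow {x y s : ℝ} (hx : 0 < x) (hy : 0 ≤ y) (hs : 0 < s) :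
    (y / x) ^ (1 / (s + 1)) * (x ^ (1 / s)) ^ (s / (s + 1)) = y ^ (1 / (s + 1)) := by
  have hexp : 1 / s * (s / (s + 1)) = 1 / (s + 1) := by field_simp
  rw [← Real.rpow_mul hx.le, hexp, ← Real.mul_rpow (div_nonneg hy hx.le) hx.le,
    div_mul_cancel₀ y hx.ne']

section Holder

variable {α : Type*} [MeasurableSpace α] {μ : Measure α}

theorem integral_rpow_mul_rpow_le {f g : α → ℝ} {p q : ℝ} (hf : Integrable f μ)
    (hg : Integrable g μ) (hf0 : 0 ≤ᵐ[μ] f) (hg0 : 0 ≤ᵐ[μ] g) (hp : 0 ≤ p) (hq : 0 ≤ q)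
    (hpq : p + q = 1) :
    ∫ a, f a ^ p * g a ^ q ∂μ ≤ (∫ a, f a ∂μ) ^ p * (∫ a, g a ∂μ) ^ q := by
  have hfg0 : 0 ≤ᵐ[μ] fun a ↦ f a ^ p * g a ^ q := by
    filter_upwards [hf0, hg0] with a hfa hga
    exact mul_nonneg (Real.rpow_nonneg hfa p) (Real.rpow_nonneg hga q)
  have hfg : AEStronglyMeasurable (fun a ↦ f a ^ p * g a ^ q) μ :=
    ((hf.aemeasurable.pow_const p).mul (hg.aemeasurable.pow_const q)).aestronglyMeasurable
  rw [integral_eq_lintegral_of_nonneg_ae hfg0 hfg, integral_eq_lintegral_of_nonneg_ae hf0 hf.1,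
    integral_eq_lintegral_of_nonneg_ae hg0 hg.1, ENNReal.toReal_rpow, ENNReal.toReal_rpow,
    ← ENNReal.toReal_mul]
  refine ENNReal.toReal_mono (ENNReal.mul_ne_top
    (ENNReal.rpow_ne_top_of_nonneg hp ((lintegral_ofReal_ne_top_iff_integrable hf.1 hf0).2 hf))
    (ENNReal.rpow_ne_top_of_nonneg hq ((lintegral_ofReal_ne_top_iff_integrable hg.1 hg0).2 hg)))
    ?_
  calc ∫⁻ a, ENNReal.ofReal (f a ^ p * g a ^ q) ∂μ
      = ∫⁻ a, ENNReal.ofReal (f a) ^ p * ENNReal.ofReal (g a) ^ q ∂μ := by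
        refine lintegral_congr_ae ?_
        filter_upwards [hf0, hg0] with a hfa hga
        rw [ENNReal.ofReal_mul (Real.rpow_nonneg hfa p), ENNReal.ofReal_rpow_of_nonneg hfa hp,
          ENNReal.ofReal_rpow_of_nonneg hga hq]
    _ ≤ _ := ENNReal.lintegral_mul_norm_pow_le hf.aemeasurable.ennreal_ofReal
        hg.aemeasurable.ennreal_ofReal hp hq hpq

theorem average_nonneg_of_ae {f : α → ℝ} (hf : 0 ≤ᵐ[μ] f) : 0 ≤ ⨍ a, f a ∂μ :=
  integral_nonneg_of_ae (Measure.ae_smul_measure hf _)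

theorem average_rpow_mul_rpow_le {f g : α → ℝ} {p q : ℝ} (hf : Integrable f μ)
    (hg : Integrable g μ) (hf0 : 0 ≤ᵐ[μ] f) (hg0 : 0 ≤ᵐ[μ] g) (hp : 0 ≤ p) (hq : 0 ≤ q)
    (hpq : p + q = 1) :
    ⨍ a, f a ^ p * g a ^ q ∂μ ≤ (⨍ a, f a ∂μ) ^ p * (⨍ a, g a ∂μ) ^ q :=
  integral_rpow_mul_rpow_le hf.to_average hg.to_average (Measure.ae_smul_measure hf0 _)
    (Measure.ae_smul_measure hg0 _) hp hq hpq

theorem average_rpow_le_of_ratio {g h : α → ℝ} {s : ℝ} (hs : 0 < s)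
    (hg0 : ∀ᵐ a ∂μ, 0 < g a) (hh0 : ∀ᵐ a ∂μ, 0 ≤ h a)
    (hg : Integrable (fun a ↦ g a ^ (1 / s)) μ) (hhg : Integrable (fun a ↦ h a / g a) μ) :
    ⨍ a, h a ^ (1 / (s + 1)) ∂μ ≤
      (⨍ a, h a / g a ∂μ) ^ (1 / (s + 1)) * (⨍ a, g a ^ (1 / s) ∂μ) ^ (s / (s + 1)) := by
  have hident : (fun a ↦ (h a / g a) ^ (1 / (s + 1)) * (g a ^ (1 / s)) ^ (s / (s + 1)))
      =ᵐ[μ] fun a ↦ h a ^ (1 / (s + 1)) := by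
    filter_upwards [hg0, hh0] with a hga hha
    exact div_rpow_mul_rpow_rpow hga hha hs
  rw [← average_congr hident]
  refine average_rpow_mul_rpow_le hhg hg ?_ ?_ (by positivity) (by positivity) (by field_simp; ring)
  · filter_upwards [hg0, hh0] with a hga hha
    exact div_nonneg hha hga.le
  · filter_upwards [hg0] with a hga
    positivity

end Holder

theorem le_rpow_mul_rpow_of_step {x r : ℕ → ℝ} {B C : ℝ} (hx : ∀ n ≥ 2, 0 ≤ x n)
    (hr : ∀ n ≥ 2, 0 ≤ r n) (hrC : ∀ n ≥ 2, r n ≤ C) (hx2 : x 2 ≤ B)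
    (hstep : ∀ n ≥ 2, x (n + 1) ≤ r n ^ (1 / ((n : ℝ) + 1)) * x n ^ ((n : ℝ) / (n + 1))) :
    ∀ n ≥ 2, x n ≤ C ^ (((n : ℝ) - 2) / n) * B ^ ((2 : ℝ) / n) := by
  have hB : 0 ≤ B := (hx 2 le_rfl).trans hx2
  intro n hn
  induction n, hn using Nat.le_induction with
  | base => norm_num [hx2]
  | succ n hn ih =>
    have hC : 0 ≤ C := (hr n hn).trans (hrC n hn)
    have hn' : (2 : ℝ) ≤ n := by exact_mod_cast hn
    have hexpC : 1 / ((n : ℝ) + 1) + (n - 2) / n * (n / (n + 1)) = (n + 1 - 2) / (n + 1) := by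
      field_simp; ring
    have hexpB : 2 / (n : ℝ) * (n / (n + 1)) = 2 / (n + 1) := by
      field_simp
    have hexpC_ne : ((n : ℝ) + 1 - 2) / (n + 1) ≠ 0 := (div_pos (by linarith) (by linarith)).ne'
    calc x (n + 1) ≤ r n ^ (1 / ((n : ℝ) + 1)) * x n ^ ((n : ℝ) / (n + 1)) := hstep n hn
      _ ≤ C ^ (1 / ((n : ℝ) + 1)) * (C ^ (((n : ℝ) - 2) / n) * B ^ ((2 : ℝ) / n)) ^
            ((n : ℝ) / (n + 1)) :=
        mul_le_mul (Real.rpow_le_rpow (hr n hn) (hrC n hn) (by positivity))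
          (Real.rpow_le_rpow (hx n hn) ih (by positivity)) (Real.rpow_nonneg (hx n hn) _)
          (Real.rpow_nonneg hC _)
      _ = C ^ ((((n + 1 : ℕ) : ℝ) - 2) / (n + 1 : ℕ)) * B ^ ((2 : ℝ) / (n + 1 : ℕ)) := by
        rw [Real.mul_rpow (by positivity) (by positivity), ← Real.rpow_mul hC,
          ← Real.rpow_mul hB, ← mul_assoc, ← Real.rpow_add' hC (hexpC ▸ hexpC_ne),
          hexpC, hexpB]
        push_cast
        rfl

theorem hierarchy_induction_general (T : ℝ) (hT : 0 < T) (f : ℕ → ℝ → ℝ)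
    (hpos : ∀ n ≥ 2, ∀ t ∈ Set.Icc (0:ℝ) T, 0 < f n t)
    (hint1 : ∀ n ≥ 2, IntervalIntegrable
      (fun t => f n t ^ ((1:ℝ)/(n:ℝ))) MeasureTheory.volume 0 T)
    (hint2 : ∀ n ≥ 2, IntervalIntegrable
      (fun t => f (n+1) t / f n t) MeasureTheory.volume 0 T)
    (B C : ℝ)
    (h2 : (1/T) * ∫ τ in (0:ℝ)..T, f 2 τ ^ ((1:ℝ)/2) ≤ B)
    (hrat : ∀ n ≥ 2, (1/T) * ∫ τ in (0:ℝ)..T, f (n+1) τ / f n τ ≤ C) :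
    ∀ n ≥ 2, (1/T) * ∫ τ in (0:ℝ)..T, f n τ ^ ((1:ℝ)/(n:ℝ)) ≤
      C ^ (((n:ℝ) - 2)/(n:ℝ)) * B ^ ((2:ℝ)/(n:ℝ)) := by
  have havg (g : ℝ → ℝ) :
      (1 / T) * ∫ τ in (0:ℝ)..T, g τ = ⨍ τ in (0:ℝ)..T, g τ := by
    rw [interval_average_eq_div, sub_zero, one_div_mul_eq_div]
  have hpos_ae (n : ℕ) (hn : n ≥ 2) : ∀ᵐ t ∂volume.restrict (Ι 0 T), 0 < f n t :=
    ae_restrict_of_forall_mem measurableSet_uIoc fun t ht ↦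
      hpos n hn t (Ioc_subset_Icc_self (uIoc_of_le hT.le ▸ ht))
  simp only [havg] at h2 hrat ⊢
  refine le_rpow_mul_rpow_of_step (fun n hn ↦ ?_) (fun n hn ↦ ?_) hrat (by simpa using h2)
    (fun n hn ↦ ?_)
  · exact average_nonneg_of_ae <| (hpos_ae n hn).mono fun t ht ↦ Real.rpow_nonneg ht.le _
  · exact average_nonneg_of_ae <| (hpos_ae n hn).and (hpos_ae (n + 1) (by omega)) |>.mono
      fun t ht ↦ div_nonneg ht.2.le ht.1.le
  · push_cast
    exact average_rpow_le_of_ratio (by positivity) (hpos_ae n hn)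
      ((hpos_ae (n + 1) (by omega)).mono fun t ht ↦ ht.le)
      (intervalIntegrable_iff.1 (hint1 n hn)) (intervalIntegrable_iff.1 (hint2 n hn))

/-- The hierarchy induction: if `⟨f₂^{1/2}⟩_T ≤ B` and
`⟨f_{n+1}/f_n⟩_T ≤ C` for all `n ≥ 2`, then
`⟨f_n^{1/n}⟩_T ≤ C^{(n−2)/n}·B^{2/n}` for every `n ≥ 2`. -/
theorem hierarchy_induction (T : ℝ) (hT : 0 < T) (f : ℕ → ℝ → ℝ)
    (hmeas : ∀ n ≥ 2, Measurable (f n))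
    (hpos : ∀ n ≥ 2, ∀ t ∈ Set.Icc (0:ℝ) T, 0 < f n t)
    (hint1 : ∀ n ≥ 2, IntervalIntegrable
      (fun t => f n t ^ ((1:ℝ)/(n:ℝ))) MeasureTheory.volume 0 T)
    (hint2 : ∀ n ≥ 2, IntervalIntegrable
      (fun t => f (n+1) t / f n t) MeasureTheory.volume 0 T)
    (B C : ℝ) (hB : 0 ≤ B) (hC : 0 ≤ C)
    (h2 : (1/T) * ∫ τ in (0:ℝ)..T, f 2 τ ^ ((1:ℝ)/2) ≤ B)
    (hrat : ∀ n ≥ 2, (1/T) * ∫ τ in (0:ℝ)..T, f (n+1) τ / f n τ ≤ C) :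
    ∀ n ≥ 2, (1/T) * ∫ τ in (0:ℝ)..T, f n τ ^ ((1:ℝ)/(n:ℝ)) ≤
      C ^ (((n:ℝ) - 2)/(n:ℝ)) * B ^ ((2:ℝ)/(n:ℝ)) :=
  hierarchy_induction_general T hT f hpos hint1 hint2 B C h2 hrat
end
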